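/- arXiv:math/0508426 — 2 statements merged into one kernel-verified Lean document; each statement's English description precedes it below -/
import Mathlib

section
/- Let T > 0 and for each n ≥ 1 let fₙ : [0,T] × [0,T]ⁿ × ℝⁿ → ℝ be continuous, bounded by Cₙ, and Lipschitz in the last n variables: |fₙ(t, s, x) − fₙ(t, s, ξ)| ≤ Lₙ Σᵢ|xᵢ − ξᵢ|. Assume the power series Σₙ Cₙ tⁿ/n! and Σₙ L_{n+1} tⁿ/n! have radius of convergence exceeding T. Then the equation y(t) = y₀(t) + Σ_{n≥1} (1/n!) ∫₀ᵗ⋯∫₀ᵗ fₙ(t, s₁,…,sₙ, y(s₁),…,y(sₙ)) ds₁⋯dsₙ, with y₀ continuous, has a unique continuous solution y on [0,T]. -/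
/-!
Rescaling `[0,t]ⁿ` to the unit cube makes each multiple integral continuous in `t`, and the bounds
`Cₙ` make the series converge uniformly, so the right-hand side `Φ y` of the equation is continuous
whenever `y` is. Integrating the Lipschitz bound coordinate by coordinate gives the Volterra-type
estimate `|Φ y t - Φ z t| ≤ K ∫₀ᵗ |y - z|` with `K = ∑ₙ |L (n+1)| Tⁿ / n!`. In the weighted norm
`max_t e^{-νt} |y t|` with `ν = 2K + 1` this makes `Φ` a contraction with constant `1/2`, and the
Banach fixed point theorem gives existence and uniqueness.
-/

open MeasureTheory Set

/-- `y` solves the multiple-integral Volterra series equation on `[0,T]`. -/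
def IsVolterraSeriesSolution (T : ℝ)
    (f : (n : ℕ) → ℝ → (Fin n → ℝ) → (Fin n → ℝ) → ℝ)
    (y₀ y : ℝ → ℝ) : Prop :=
  ContinuousOn y (Icc 0 T) ∧
    ∀ t ∈ Icc 0 T,
      y t = y₀ t + ∑' n : ℕ, (1 / (Nat.factorial (n + 1)) : ℝ) *
        ∫ s in Set.univ.pi fun _ : Fin (n + 1) => Icc (0 : ℝ) t,
          f (n + 1) t s fun i => y (s i)

open scoped Pointwise

namespace VolterraSeries

def cube (m : ℕ) (t : ℝ) : Set (Fin m → ℝ) := univ.pi fun _ => Icc 0 t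

lemma measurableSet_cube (m : ℕ) (t : ℝ) : MeasurableSet (cube m t) :=
  .univ_pi fun _ => measurableSet_Icc

lemma isCompact_cube (m : ℕ) (t : ℝ) : IsCompact (cube m t) :=
  isCompact_univ_pi fun _ => isCompact_Icc

lemma cube_mono (m : ℕ) {t T : ℝ} (h : t ≤ T) : cube m t ⊆ cube m T :=
  pi_mono fun _ _ => Icc_subset_Icc_right h

lemma smul_mem_cube {m : ℕ} {t T : ℝ} (ht : t ∈ Icc 0 T) {w : Fin m → ℝ} (hw : w ∈ cube m 1) :
    t • w ∈ cube m T := fun i _ => by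
  obtain ⟨hw0, hw1⟩ := hw i trivial
  exact ⟨mul_nonneg ht.1 hw0, (mul_le_of_le_one_right ht.1 hw1).trans ht.2⟩

lemma smul_cube_one (m : ℕ) {t : ℝ} (ht : 0 < t) : t • cube m 1 = cube m t := by
  rw [cube, cube, smul_pi₀ _ _ ht.ne']
  congr 1
  ext1 i
  simp [Pi.smul_apply, LinearOrderedField.smul_Icc ht]

lemma volume_real_cube (m : ℕ) {t : ℝ} (ht : 0 ≤ t) : volume.real (cube m t) = t ^ m := by
  rw [measureReal_def, cube, volume_pi_pi]
  simp [Real.volume_Icc, ht]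

lemma setIntegral_cube_eq_pow_mul (m : ℕ) (g : (Fin m → ℝ) → ℝ) {t : ℝ} (ht : 0 ≤ t) :
    ∫ s in cube m t, g s = t ^ m * ∫ w in cube m 1, g (t • w) := by
  rcases ht.eq_or_lt with rfl | ht
  · have hzero : ∀ s ∈ cube m 0, g s = g 0 := fun s hs =>
      congrArg g (funext fun i => le_antisymm (hs i trivial).2 (hs i trivial).1)
    simp only [zero_smul]
    rw [setIntegral_congr_fun (measurableSet_cube m 0) hzero, setIntegral_const,
      setIntegral_const, volume_real_cube m le_rfl, volume_real_cube m zero_le_one]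
    simp
  · rw [Measure.setIntegral_comp_smul_of_pos _ _ _ ht, smul_cube_one m ht,
      Module.finrank_fin_fun, smul_eq_mul, ← mul_assoc, mul_inv_cancel₀ (pow_ne_zero _ ht.ne'),
      one_mul]

lemma setIntegral_cube_comp_eval (m : ℕ) {g : ℝ → ℝ} {t : ℝ} (ht : 0 ≤ t)
    (hg : AEStronglyMeasurable g (volume.restrict (Icc 0 t))) (i : Fin (m + 1)) :
    ∫ s in cube (m + 1) t, g (s i) = t ^ m * ∫ x in Icc 0 t, g x := by
  rw [cube, volume_pi, Measure.restrict_pi_pi,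
    ← integral_map (measurable_pi_apply i).aemeasurable, Measure.pi_map_eval]
  · simp [Real.volume_Icc, ht, integral_smul_measure]
  · rw [Measure.pi_map_eval]
    exact hg.smul_measure _

lemma continuousOn_setIntegral_cube {m : ℕ} {T : ℝ} {F : ℝ → (Fin m → ℝ) → ℝ}
    (hF : ContinuousOn (Function.uncurry F) (Icc 0 T ×ˢ cube m T)) :
    ContinuousOn (fun t => ∫ s in cube m t, F t s) (Icc 0 T) := by
  have hG : ContinuousOn (fun p : ℝ × (Fin m → ℝ) => F p.1 (p.1 • p.2)) (Icc 0 T ×ˢ cube m 1) :=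
    hF.comp (f := fun p : ℝ × (Fin m → ℝ) => (p.1, p.1 • p.2)) (by fun_prop)
      fun p hp => ⟨hp.1, smul_mem_cube hp.1 hp.2⟩
  obtain ⟨M, hM⟩ := (isCompact_Icc.prod (isCompact_cube m 1)).exists_bound_of_continuousOn hG
  have hunit : ContinuousOn (fun t => ∫ w in cube m 1, F t (t • w)) (Icc 0 T) := by
    refine continuousOn_of_dominated (bound := fun _ => M) (fun t ht => ?_) (fun t ht => ?_)
      (integrableOn_const (isCompact_cube m 1).measure_ne_top) ?_
    · exact (hG.comp (f := fun w => (t, w)) (by fun_prop) fun w hw => ⟨ht, hw⟩)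
        |>.aestronglyMeasurable (measurableSet_cube m 1)
    · exact (ae_restrict_iff' (measurableSet_cube m 1)).2 <|
        .of_forall fun w hw => hM (t, w) ⟨ht, hw⟩
    · exact (ae_restrict_iff' (measurableSet_cube m 1)).2 <|
        .of_forall fun w hw => hG.comp (f := fun t => (t, w)) (by fun_prop) fun t ht => ⟨ht, hw⟩
  exact ((continuousOn_pow m).mul hunit).congr fun t ht => setIntegral_cube_eq_pow_mul m _ ht.1

noncomputable section MultipleIntegral

variable {T : ℝ} {m : ℕ} {y z : ℝ → ℝ}

def multipleIntegral (F : ℝ → (Fin m → ℝ) → (Fin m → ℝ) → ℝ) (y : ℝ → ℝ) (t : ℝ) : ℝ :=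
  ∫ s in cube m t, F t s fun i => y (s i)

section

variable {F : ℝ → (Fin m → ℝ) → (Fin m → ℝ) → ℝ}

lemma continuousOn_comp_coords
    (hF : ContinuousOn (fun p : ℝ × (Fin m → ℝ) × (Fin m → ℝ) => F p.1 p.2.1 p.2.2)
      (Icc 0 T ×ˢ (cube m T ×ˢ univ)))
    (hy : ContinuousOn y (Icc 0 T)) :
    ContinuousOn (fun p : ℝ × (Fin m → ℝ) => F p.1 p.2 fun i => y (p.2 i))
      (Icc 0 T ×ˢ cube m T) := by
  have hcoords : ContinuousOn (fun p : ℝ × (Fin m → ℝ) => fun i => y (p.2 i))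
      (Icc 0 T ×ˢ cube m T) := continuousOn_pi.2 fun i =>
    hy.comp (by fun_prop) fun p hp => hp.2 i trivial
  exact hF.comp (continuousOn_fst.prodMk (continuousOn_snd.prodMk hcoords))
    fun p hp => ⟨hp.1, hp.2, trivial⟩

lemma continuousOn_multipleIntegral
    (hF : ContinuousOn (fun p : ℝ × (Fin m → ℝ) × (Fin m → ℝ) => F p.1 p.2.1 p.2.2)
      (Icc 0 T ×ˢ (cube m T ×ˢ univ)))
    (hy : ContinuousOn y (Icc 0 T)) :
    ContinuousOn (multipleIntegral F y) (Icc 0 T) :=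
  continuousOn_setIntegral_cube (F := fun t s => F t s fun i => y (s i))
    (continuousOn_comp_coords hF hy)

lemma integrableOn_comp_coords
    (hF : ContinuousOn (fun p : ℝ × (Fin m → ℝ) × (Fin m → ℝ) => F p.1 p.2.1 p.2.2)
      (Icc 0 T ×ˢ (cube m T ×ˢ univ)))
    (hy : ContinuousOn y (Icc 0 T)) {t : ℝ} (ht : t ∈ Icc 0 T) :
    IntegrableOn (fun s => F t s fun i => y (s i)) (cube m t) :=
  ((continuousOn_comp_coords hF hy).comp (f := fun s => (t, s)) (by fun_prop)
    fun _ hs => ⟨ht, cube_mono m ht.2 hs⟩).integrableOn_compact (isCompact_cube m t)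

lemma abs_multipleIntegral_le {c t : ℝ} (ht : 0 ≤ t)
    (hbd : ∀ s x, (∀ i, s i ∈ Icc 0 t) → |F t s x| ≤ c) :
    |multipleIntegral F y t| ≤ c * t ^ m := by
  rw [← volume_real_cube m ht, ← Real.norm_eq_abs]
  exact norm_setIntegral_le_of_norm_le_const (isCompact_cube m t).measure_lt_top
    fun s hs => hbd s _ fun i => hs i trivial

end

lemma abs_multipleIntegral_sub_le {F : ℝ → (Fin (m + 1) → ℝ) → (Fin (m + 1) → ℝ) → ℝ}
    (hF : ContinuousOn
      (fun p : ℝ × (Fin (m + 1) → ℝ) × (Fin (m + 1) → ℝ) => F p.1 p.2.1 p.2.2)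
      (Icc 0 T ×ˢ (cube (m + 1) T ×ˢ univ)))
    {c t : ℝ} (ht : t ∈ Icc 0 T)
    (hlip : ∀ s x ξ, (∀ i, s i ∈ Icc 0 t) → |F t s x - F t s ξ| ≤ c * ∑ i, |x i - ξ i|)
    (hy : ContinuousOn y (Icc 0 T)) (hz : ContinuousOn z (Icc 0 T)) :
    |multipleIntegral F y t - multipleIntegral F z t|
      ≤ c * ((m + 1) * t ^ m * ∫ s in Icc 0 t, |y s - z s|) := by
  have hyz : ContinuousOn (fun s => |y s - z s|) (Icc 0 t) :=
    (hy.sub hz).abs.mono (Icc_subset_Icc_right ht.2)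
  have hcoord (i : Fin (m + 1)) :
      IntegrableOn (fun s => |y (s i) - z (s i)|) (cube (m + 1) t) :=
    (hyz.comp (continuous_apply i).continuousOn fun s (hs : s ∈ cube (m + 1) t) => hs i trivial)
      |>.integrableOn_compact (isCompact_cube _ t)
  rw [multipleIntegral, multipleIntegral, ← integral_sub (integrableOn_comp_coords hF hy ht)
    (integrableOn_comp_coords hF hz ht), ← Real.norm_eq_abs]
  calc _ ≤ ∫ s in cube (m + 1) t, c * ∑ i, |y (s i) - z (s i)| :=
        norm_integral_le_of_norm_le ((integrable_finsetSum _ fun i _ => hcoord i).const_mul c)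
          ((ae_restrict_iff' (measurableSet_cube _ t)).2 <| .of_forall fun s hs =>
            hlip s _ _ fun i => hs i trivial)
    _ = c * ((m + 1) * t ^ m * ∫ s in Icc 0 t, |y s - z s|) := by
        rw [integral_const_mul, integral_finsetSum _ fun i _ => hcoord i]
        simp only [setIntegral_cube_comp_eval m ht.1 (hyz.aestronglyMeasurable measurableSet_Icc),
          Finset.sum_const, Finset.card_univ, Fintype.card_fin, nsmul_eq_mul]
        push_cast
        ring

end MultipleIntegral

lemma integral_Icc_exp_mul {ν t : ℝ} (hν : ν ≠ 0) (ht : 0 ≤ t) :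
    ∫ s in Icc 0 t, Real.exp (ν * s) = (Real.exp (ν * t) - 1) / ν := by
  rw [integral_Icc_eq_integral_Ioc, ← intervalIntegral.integral_of_le ht,
    intervalIntegral.integral_comp_mul_left _ hν, integral_exp]
  simp [div_eq_inv_mul]

def VolterraLipschitzOn (K T : ℝ) (Φ : (ℝ → ℝ) → ℝ → ℝ) : Prop :=
  ∀ y z : ℝ → ℝ, ContinuousOn y (Icc 0 T) → ContinuousOn z (Icc 0 T) →
    ∀ t ∈ Icc 0 T, |Φ y t - Φ z t| ≤ K * ∫ s in Icc 0 t, |y s - z s|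

namespace VolterraLipschitzOn

variable {K T : ℝ} {Φ : (ℝ → ℝ) → ℝ → ℝ} {y z : ℝ → ℝ}

lemma eqOn (hΦ : VolterraLipschitzOn K T Φ) (hy : ContinuousOn y (Icc 0 T))
    (hz : ContinuousOn z (Icc 0 T)) (hyz : EqOn y z (Icc 0 T)) :
    EqOn (Φ y) (Φ z) (Icc 0 T) := fun t ht => by
  have hzero : ∫ s in Icc 0 t, |y s - z s| = 0 :=
    setIntegral_eq_zero_of_forall_eq_zero fun s hs => by
      rw [hyz ⟨hs.1, hs.2.trans ht.2⟩, sub_self, abs_zero]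
  simpa [hzero, sub_eq_zero] using hΦ y z hy hz t ht

/-- The weight `e^{νs}` integrates over `[0,t]` to less than `e^{νt} / ν`, so `Φ` contracts the
weighted norm `max_t e^{-νt} |y t|` by the factor `K / ν`. -/
lemma abs_sub_le_mul_exp (hΦ : VolterraLipschitzOn K T Φ) (hK : 0 ≤ K) {ν d : ℝ} (hν : 0 < ν)
    (hd : 0 ≤ d) (hy : ContinuousOn y (Icc 0 T)) (hz : ContinuousOn z (Icc 0 T))
    (hyz : ∀ s ∈ Icc 0 T, |y s - z s| ≤ d * Real.exp (ν * s)) {t : ℝ} (ht : t ∈ Icc 0 T) :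
    |Φ y t - Φ z t| ≤ K / ν * d * Real.exp (ν * t) := by
  have hsub : Icc 0 t ⊆ Icc 0 T := Icc_subset_Icc_right ht.2
  calc |Φ y t - Φ z t| ≤ K * ∫ s in Icc 0 t, |y s - z s| := hΦ y z hy hz t ht
    _ ≤ K * ∫ s in Icc 0 t, d * Real.exp (ν * s) := by
        refine mul_le_mul_of_nonneg_left ?_ hK
        refine setIntegral_mono_on ?_ ?_ measurableSet_Icc fun s hs => hyz s (hsub hs)
        · exact ((hy.sub hz).abs.mono hsub).integrableOn_compact isCompact_Icc
        · exact (by fun_prop : Continuous fun s => d * Real.exp (ν * s)).integrableOn_Icc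
    _ = K / ν * d * (Real.exp (ν * t) - 1) := by
        rw [integral_const_mul, integral_Icc_exp_mul hν.ne' ht.1]
        ring
    _ ≤ K / ν * d * Real.exp (ν * t) := by
        gcongr
        linarith

end VolterraLipschitzOn

noncomputable section ExpWeight

variable {T : ℝ}

def expUnweight (hT : 0 ≤ T) (ν : ℝ) (u : C(Icc 0 T, ℝ)) (s : ℝ) : ℝ :=
  Real.exp (ν * s) * IccExtend hT u s

lemma continuous_expUnweight (hT : 0 ≤ T) (ν : ℝ) (u : C(Icc 0 T, ℝ)) :
    Continuous (expUnweight hT ν u) :=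
  (by fun_prop : Continuous fun s => Real.exp (ν * s)).mul u.continuous.Icc_extend'

lemma expUnweight_of_mem (hT : 0 ≤ T) (ν : ℝ) (u : C(Icc 0 T, ℝ)) {s : ℝ}
    (hs : s ∈ Icc 0 T) : expUnweight hT ν u s = Real.exp (ν * s) * u ⟨s, hs⟩ := by
  rw [expUnweight, IccExtend_of_mem]

lemma abs_expUnweight_sub_le (hT : 0 ≤ T) (ν : ℝ) (u v : C(Icc 0 T, ℝ)) (s : ℝ) :
    |expUnweight hT ν u s - expUnweight hT ν v s| ≤ dist u v * Real.exp (ν * s) := by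
  rw [expUnweight, expUnweight, ← mul_sub, abs_mul, Real.abs_exp, mul_comm, ← Real.dist_eq]
  gcongr
  exact ContinuousMap.dist_apply_le_dist _

def expWeight {y : ℝ → ℝ} (hy : ContinuousOn y (Icc 0 T)) (ν : ℝ) : C(Icc 0 T, ℝ) :=
  ⟨(Icc 0 T).domRestrict fun t => Real.exp (-(ν * t)) * y t,
    ((by fun_prop : Continuous fun t => Real.exp (-(ν * t))).continuousOn.mul hy).domRestrict⟩

@[simp]
lemma expWeight_apply {y : ℝ → ℝ} (hy : ContinuousOn y (Icc 0 T)) (ν : ℝ) (t : Icc 0 T) :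
    expWeight hy ν t = Real.exp (-(ν * t)) * y t :=
  rfl

lemma expWeight_expUnweight (hT : 0 ≤ T) (ν : ℝ) (u : C(Icc 0 T, ℝ)) :
    expWeight (continuous_expUnweight hT ν u).continuousOn ν = u := by
  ext t
  rw [expWeight_apply, expUnweight_of_mem hT ν u t.2, ← mul_assoc, ← Real.exp_add,
    neg_add_cancel, Real.exp_zero, one_mul]

lemma eqOn_expUnweight_expWeight (hT : 0 ≤ T) {y : ℝ → ℝ} (hy : ContinuousOn y (Icc 0 T))
    (ν : ℝ) : EqOn (expUnweight hT ν (expWeight hy ν)) y (Icc 0 T) := fun s hs => by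
  rw [expUnweight_of_mem hT ν _ hs, expWeight_apply, ← mul_assoc, ← Real.exp_add,
    add_neg_cancel, Real.exp_zero, one_mul]

lemma expWeight_eq_iff {y z : ℝ → ℝ} (hy : ContinuousOn y (Icc 0 T))
    (hz : ContinuousOn z (Icc 0 T)) (ν : ℝ) :
    expWeight hy ν = expWeight hz ν ↔ EqOn y z (Icc 0 T) := by
  simp only [ContinuousMap.ext_iff, expWeight_apply, mul_right_inj' (Real.exp_pos _).ne',
    Subtype.forall]
  rfl

/-- Multiplying by `e^{-νt}` turns the weighted norm `max_t e^{-νt} |y t|` into the sup norm of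
`C([0,T], ℝ)`, so `Φ` is studied through this conjugate. -/
def expConj (Φ : (ℝ → ℝ) → ℝ → ℝ)
    (hcont : ∀ y, ContinuousOn y (Icc 0 T) → ContinuousOn (Φ y) (Icc 0 T)) (hT : 0 ≤ T)
    (ν : ℝ) (u : C(Icc 0 T, ℝ)) : C(Icc 0 T, ℝ) :=
  expWeight (hcont _ (continuous_expUnweight hT ν u).continuousOn) ν

end ExpWeight

namespace VolterraLipschitzOn

variable {K T : ℝ} {Φ : (ℝ → ℝ) → ℝ → ℝ}

lemma contractingWith_expConj (hΦ : VolterraLipschitzOn K T Φ) (hK : 0 ≤ K)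
    (hcont : ∀ y, ContinuousOn y (Icc 0 T) → ContinuousOn (Φ y) (Icc 0 T)) (hT : 0 ≤ T) :
    ContractingWith 2⁻¹ (expConj Φ hcont hT (2 * K + 1)) := by
  refine ⟨by rw [← NNReal.coe_lt_coe]; norm_num, LipschitzWith.of_dist_le_mul fun u v => ?_⟩
  set ν := 2 * K + 1
  have hν : 0 < ν := by positivity
  rw [NNReal.coe_inv, NNReal.coe_ofNat, ContinuousMap.dist_le (by positivity)]
  intro t
  have hlip := hΦ.abs_sub_le_mul_exp hK hν dist_nonneg
    (continuous_expUnweight hT ν u).continuousOn (continuous_expUnweight hT ν v).continuousOn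
    (fun s _ => abs_expUnweight_sub_le hT ν u v s) t.2
  rw [expConj, expConj, expWeight_apply, expWeight_apply, Real.dist_eq, ← mul_sub, abs_mul,
    Real.abs_exp]
  calc Real.exp (-(ν * t)) * |Φ (expUnweight hT ν u) t - Φ (expUnweight hT ν v) t|
      ≤ Real.exp (-(ν * t)) * (K / ν * dist u v * Real.exp (ν * t)) := by gcongr
    _ = K / ν * dist u v := by
        rw [mul_comm, mul_assoc, ← Real.exp_add, add_neg_cancel, Real.exp_zero, mul_one]
    _ ≤ 2⁻¹ * dist u v := by
        gcongr
        rw [div_le_iff₀ hν]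
        linarith

lemma isFixedPt_expConj_iff (hΦ : VolterraLipschitzOn K T Φ)
    (hcont : ∀ y, ContinuousOn y (Icc 0 T) → ContinuousOn (Φ y) (Icc 0 T)) (hT : 0 ≤ T)
    (ν : ℝ) {y : ℝ → ℝ} (hy : ContinuousOn y (Icc 0 T)) :
    Function.IsFixedPt (expConj Φ hcont hT ν) (expWeight hy ν) ↔ EqOn y (Φ y) (Icc 0 T) := by
  have hΦy : EqOn (Φ (expUnweight hT ν (expWeight hy ν))) (Φ y) (Icc 0 T) :=
    hΦ.eqOn (continuous_expUnweight hT ν _).continuousOn hy (eqOn_expUnweight_expWeight hT hy ν)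
  rw [Function.IsFixedPt, expConj, expWeight_eq_iff]
  exact ⟨fun h => (hΦy.symm.trans h).symm, fun h => hΦy.trans h.symm⟩

theorem exists_fixedPoint_and_unique (hΦ : VolterraLipschitzOn K T Φ) (hK : 0 ≤ K)
    (hcont : ∀ y, ContinuousOn y (Icc 0 T) → ContinuousOn (Φ y) (Icc 0 T)) (hT : 0 ≤ T) :
    (∃ y, ContinuousOn y (Icc 0 T) ∧ EqOn y (Φ y) (Icc 0 T)) ∧
      ∀ y₁ y₂, ContinuousOn y₁ (Icc 0 T) ∧ EqOn y₁ (Φ y₁) (Icc 0 T) →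
        ContinuousOn y₂ (Icc 0 T) ∧ EqOn y₂ (Φ y₂) (Icc 0 T) → EqOn y₁ y₂ (Icc 0 T) := by
  have hΨ := hΦ.contractingWith_expConj hK hcont hT
  set ν := 2 * K + 1
  refine ⟨?_, fun y₁ y₂ ⟨hy₁, hfix₁⟩ ⟨hy₂, hfix₂⟩ => ?_⟩
  · set u := ContractingWith.fixedPoint _ hΨ
    have hy : ContinuousOn (expUnweight hT ν u) (Icc 0 T) :=
      (continuous_expUnweight hT ν u).continuousOn
    refine ⟨expUnweight hT ν u, hy, (hΦ.isFixedPt_expConj_iff hcont hT ν hy).1 ?_⟩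
    rw [expWeight_expUnweight]
    exact ContractingWith.fixedPoint_isFixedPt hΨ
  · exact (expWeight_eq_iff hy₁ hy₂ ν).1 <| hΨ.fixedPoint_unique'
      ((hΦ.isFixedPt_expConj_iff hcont hT ν hy₁).2 hfix₁)
      ((hΦ.isFixedPt_expConj_iff hcont hT ν hy₂).2 hfix₂)

end VolterraLipschitzOn

lemma summable_abs_mul_pow_div_factorial_of_le {a : ℕ → ℝ} {R t : ℝ}
    (h : Summable fun n => a n * R ^ n / n.factorial) (ht : 0 ≤ t) (htR : t ≤ R) :
    Summable fun n => |a n| * t ^ n / n.factorial := by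
  refine h.abs.of_nonneg_of_le (fun n => by positivity) fun n => ?_
  rw [abs_div, abs_mul, abs_pow, abs_of_nonneg (ht.trans htR), Nat.abs_cast]
  gcongr

noncomputable section VolterraOperator

open Nat

variable {T : ℝ} {f : (n : ℕ) → ℝ → (Fin n → ℝ) → (Fin n → ℝ) → ℝ} {C L : ℕ → ℝ}

def volterraTerm (f : (n : ℕ) → ℝ → (Fin n → ℝ) → (Fin n → ℝ) → ℝ) (n : ℕ) (y : ℝ → ℝ)
    (t : ℝ) : ℝ :=
  (1 / (n + 1)! : ℝ) * multipleIntegral (f (n + 1)) y t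

def volterraOp (f : (n : ℕ) → ℝ → (Fin n → ℝ) → (Fin n → ℝ) → ℝ) (y₀ y : ℝ → ℝ) (t : ℝ) : ℝ :=
  y₀ t + ∑' n, volterraTerm f n y t

lemma isVolterraSeriesSolution_iff {y₀ y : ℝ → ℝ} :
    IsVolterraSeriesSolution T f y₀ y ↔
      ContinuousOn y (Icc 0 T) ∧ EqOn y (volterraOp f y₀ y) (Icc 0 T) :=
  Iff.rfl

lemma norm_volterraTerm_le
    (hbd : ∀ (n : ℕ) (t : ℝ) (s x : Fin (n + 1) → ℝ), t ∈ Icc 0 T →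
      (∀ i, s i ∈ Icc 0 T) → |f (n + 1) t s x| ≤ C (n + 1))
    (n : ℕ) (y : ℝ → ℝ) {t : ℝ} (ht : t ∈ Icc 0 T) :
    ‖volterraTerm f n y t‖ ≤ |C (n + 1)| * T ^ (n + 1) / (n + 1)! := by
  have hI : |multipleIntegral (f (n + 1)) y t| ≤ |C (n + 1)| * T ^ (n + 1) :=
    calc _ ≤ |C (n + 1)| * t ^ (n + 1) := abs_multipleIntegral_le ht.1 fun s x hs =>
          (hbd n t s x ht fun i => ⟨(hs i).1, (hs i).2.trans ht.2⟩).trans (le_abs_self _)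
      _ ≤ |C (n + 1)| * T ^ (n + 1) := by gcongr; exacts [ht.1, ht.2]
  rw [volterraTerm, norm_mul, Real.norm_eq_abs, Real.norm_eq_abs, abs_of_nonneg (by positivity),
    one_div, inv_mul_eq_div]
  gcongr

lemma abs_volterraTerm_sub_le
    (hfc : ∀ n : ℕ, ContinuousOn
      (fun p : ℝ × (Fin (n + 1) → ℝ) × (Fin (n + 1) → ℝ) => f (n + 1) p.1 p.2.1 p.2.2)
      (Icc 0 T ×ˢ (cube (n + 1) T ×ˢ univ)))
    (hlip : ∀ (n : ℕ) (t : ℝ) (s x ξ : Fin (n + 1) → ℝ), t ∈ Icc 0 T →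
      (∀ i, s i ∈ Icc 0 T) →
      |f (n + 1) t s x - f (n + 1) t s ξ| ≤ L (n + 1) * ∑ i, |x i - ξ i|)
    (n : ℕ) {y z : ℝ → ℝ} (hy : ContinuousOn y (Icc 0 T)) (hz : ContinuousOn z (Icc 0 T))
    {t : ℝ} (ht : t ∈ Icc 0 T) :
    |volterraTerm f n y t - volterraTerm f n z t|
      ≤ |L (n + 1)| * T ^ n / n ! * ∫ s in Icc 0 t, |y s - z s| := by
  set I := ∫ s in Icc 0 t, |y s - z s|
  have hI : 0 ≤ I := setIntegral_nonneg measurableSet_Icc fun _ _ => abs_nonneg _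
  have hdiff := abs_multipleIntegral_sub_le (hfc n) ht (fun s x ξ hs =>
    hlip n t s x ξ ht fun i => ⟨(hs i).1, (hs i).2.trans ht.2⟩) hy hz
  have htT : t ^ n ≤ T ^ n := pow_le_pow_left₀ ht.1 ht.2 n
  rw [volterraTerm, volterraTerm, ← mul_sub, abs_mul, abs_of_nonneg (by positivity)]
  calc _ ≤ (1 / (n + 1)! : ℝ) * (L (n + 1) * ((n + 1) * t ^ n * I)) := by gcongr
    _ ≤ (1 / (n + 1)! : ℝ) * (|L (n + 1)| * ((n + 1) * T ^ n * I)) := by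
        gcongr (1 / (n + 1)! : ℝ) * ?_
        exact mul_le_mul (le_abs_self _) (by gcongr)
          (mul_nonneg (mul_nonneg n.cast_add_one_pos.le (pow_nonneg ht.1 n)) hI) (abs_nonneg _)
    _ = |L (n + 1)| * T ^ n / n ! * I := by
        rw [Nat.factorial_succ]
        push_cast
        field_simp

lemma continuousOn_volterraOp {y₀ y : ℝ → ℝ} (hy₀ : ContinuousOn y₀ (Icc 0 T))
    (hfc : ∀ n : ℕ, ContinuousOn
      (fun p : ℝ × (Fin (n + 1) → ℝ) × (Fin (n + 1) → ℝ) => f (n + 1) p.1 p.2.1 p.2.2)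
      (Icc 0 T ×ˢ (cube (n + 1) T ×ˢ univ)))
    (hbd : ∀ (n : ℕ) (t : ℝ) (s x : Fin (n + 1) → ℝ), t ∈ Icc 0 T →
      (∀ i, s i ∈ Icc 0 T) → |f (n + 1) t s x| ≤ C (n + 1))
    (hC : Summable fun n => |C (n + 1)| * T ^ (n + 1) / (n + 1)!)
    (hy : ContinuousOn y (Icc 0 T)) :
    ContinuousOn (volterraOp f y₀ y) (Icc 0 T) :=
  hy₀.add <| continuousOn_tsum
    (fun n => continuousOn_const.mul (continuousOn_multipleIntegral (hfc n) hy)) hC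
    fun n _ ht => norm_volterraTerm_le hbd n y ht

lemma volterraLipschitzOn_volterraOp (y₀ : ℝ → ℝ)
    (hfc : ∀ n : ℕ, ContinuousOn
      (fun p : ℝ × (Fin (n + 1) → ℝ) × (Fin (n + 1) → ℝ) => f (n + 1) p.1 p.2.1 p.2.2)
      (Icc 0 T ×ˢ (cube (n + 1) T ×ˢ univ)))
    (hbd : ∀ (n : ℕ) (t : ℝ) (s x : Fin (n + 1) → ℝ), t ∈ Icc 0 T →
      (∀ i, s i ∈ Icc 0 T) → |f (n + 1) t s x| ≤ C (n + 1))
    (hlip : ∀ (n : ℕ) (t : ℝ) (s x ξ : Fin (n + 1) → ℝ), t ∈ Icc 0 T →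
      (∀ i, s i ∈ Icc 0 T) →
      |f (n + 1) t s x - f (n + 1) t s ξ| ≤ L (n + 1) * ∑ i, |x i - ξ i|)
    (hC : Summable fun n => |C (n + 1)| * T ^ (n + 1) / (n + 1)!)
    (hL : Summable fun n => |L (n + 1)| * T ^ n / n !) :
    VolterraLipschitzOn (∑' n, |L (n + 1)| * T ^ n / n !) T (volterraOp f y₀) := by
  intro y z hy hz t ht
  have hsum (w : ℝ → ℝ) : Summable fun n => volterraTerm f n w t :=
    hC.of_norm_bounded fun n => norm_volterraTerm_le hbd n w ht
  rw [volterraOp, volterraOp, add_sub_add_left_eq_sub, ← (hsum y).tsum_sub (hsum z),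
    ← Real.norm_eq_abs, ← tsum_mul_right]
  exact tsum_of_norm_bounded (hL.mul_right _).hasSum fun n =>
    abs_volterraTerm_sub_le hfc hlip n hy hz ht

end VolterraOperator

end VolterraSeries

open VolterraSeries

/-- Existence and uniqueness of a continuous solution of the Volterra equation
of the second kind with a series of multiple integrals, under continuity,
uniform bounds `Cₙ`, Lipschitz constants `Lₙ`, and radius-of-convergence
assumptions on the associated power series. -/
theorem volterra_series_existence_uniqueness (T : ℝ) (hT : 0 < T)
    (f : (n : ℕ) → ℝ → (Fin n → ℝ) → (Fin n → ℝ) → ℝ)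
    (y₀ : ℝ → ℝ) (hy₀ : ContinuousOn y₀ (Icc 0 T))
    (C L : ℕ → ℝ)
    (hfc : ∀ n : ℕ, ContinuousOn
      (fun p : ℝ × (Fin (n + 1) → ℝ) × (Fin (n + 1) → ℝ) =>
        f (n + 1) p.1 p.2.1 p.2.2)
      ((Icc 0 T) ×ˢ ((Set.univ.pi fun _ => Icc (0 : ℝ) T) ×ˢ Set.univ)))
    (hbd : ∀ (n : ℕ) (t : ℝ) (s x : Fin (n + 1) → ℝ), t ∈ Icc 0 T →
      (∀ i, s i ∈ Icc 0 T) → |f (n + 1) t s x| ≤ C (n + 1))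
    (hlip : ∀ (n : ℕ) (t : ℝ) (s x ξ : Fin (n + 1) → ℝ), t ∈ Icc 0 T →
      (∀ i, s i ∈ Icc 0 T) →
      |f (n + 1) t s x - f (n + 1) t s ξ| ≤ L (n + 1) * ∑ i, |x i - ξ i|)
    (hrad : ∃ R > T, Summable (fun n : ℕ => C n * R ^ n / Nat.factorial n) ∧
      Summable (fun n : ℕ => L (n + 1) * R ^ n / Nat.factorial n)) :
    (∃ y : ℝ → ℝ, IsVolterraSeriesSolution T f y₀ y) ∧
      ∀ y₁ y₂ : ℝ → ℝ, IsVolterraSeriesSolution T f y₀ y₁ →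
        IsVolterraSeriesSolution T f y₀ y₂ → EqOn y₁ y₂ (Icc 0 T) := by
  obtain ⟨R, hTR, hCR, hLR⟩ := hrad
  have hC := (summable_nat_add_iff 1).2
    (summable_abs_mul_pow_div_factorial_of_le hCR hT.le hTR.le)
  have hL := summable_abs_mul_pow_div_factorial_of_le hLR hT.le hTR.le
  simp only [isVolterraSeriesSolution_iff]
  exact (volterraLipschitzOn_volterraOp y₀ hfc hbd hlip hC hL).exists_fixedPoint_and_unique
    (tsum_nonneg fun n => by positivity) (fun y hy => continuousOn_volterraOp hy₀ hfc hbd hC hy)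
    hT.le
end

section
/- Under the hypotheses of the multiple-integral Volterra equation (fₙ continuous, Lipschitz with constants Lₙ, Σₘ L_{m+1}Tᵐ/m! < ∞), the operator S defined by (Sx)(t) = y₀(t) + Σₙ (1/n!)∫₀ᵗ⋯∫₀ᵗ fₙ(t, s₁,…,sₙ, x(s₁),…,x(sₙ)) ds₁⋯dsₙ satisfies ‖Sx − Sξ‖_μ ≤ ((1 − e^{−μT})/μ) · (Σₘ L_{m+1} Tᵐ/m!) · ‖x − ξ‖_μ for all continuous x, ξ on [0,T] and all μ > 0, where ‖x‖_μ = max_{0≤t≤T} e^{−μt}|x(t)|. -/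
/-!
The Lipschitz bound together with `|x s - ξ s| ≤ e^{μ s} ‖x - ξ‖_μ` bounds the difference of the
`n`-th integrands by `L_n ‖x - ξ‖_μ Σᵢ e^{μ sᵢ}`, whose integral over the cube `[0,t]ⁿ` is
`n tⁿ⁻¹ (e^{μt} - 1)/μ`. Dividing by `n!` and summing gives
`|Sx(t) - Sξ(t)| ≤ (Σₘ L_{m+1} Tᵐ/m!) ((e^{μt} - 1)/μ) ‖x - ξ‖_μ`, and the weight turns
`(e^{μt} - 1)/μ` into `(1 - e^{-μt})/μ`, which increases with `t`.
-/

open MeasureTheory Set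

/-- The Volterra series operator
`(Sx)(t) = y₀(t) + Σₙ (1/n!) ∫₀ᵗ⋯∫₀ᵗ fₙ(t,s₁,…,sₙ,x(s₁),…,x(sₙ)) ds`. -/
noncomputable def volterraSeriesOp
    (f : (n : ℕ) → ℝ → (Fin n → ℝ) → (Fin n → ℝ) → ℝ)
    (y₀ x : ℝ → ℝ) (t : ℝ) : ℝ :=
  y₀ t + ∑' n : ℕ, (1 / (Nat.factorial (n + 1)) : ℝ) *
    ∫ s in Set.univ.pi fun _ : Fin (n + 1) => Icc (0 : ℝ) t,
      f (n + 1) t s fun i => x (s i)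

theorem abs_tsum_sub_tsum_le {ι : Type*} {a b c : ι → ℝ} (h : ∀ i, |a i - b i| ≤ c i)
    (hc : Summable c) : |∑' i, a i - ∑' i, b i| ≤ ∑' i, c i := by
  have hab : Summable fun i => a i - b i :=
    (hc.of_nonneg_of_le (fun i => abs_nonneg _) h).of_abs
  by_cases ha : Summable a
  · rw [← ha.tsum_sub (by simpa using ha.sub hab)]
    exact (norm_tsum_le_tsum_norm hab.norm).trans (hab.abs.tsum_le_tsum h hc)
  · have hb : ¬Summable b := fun hb => ha (by simpa using hb.add hab)
    rw [tsum_eq_zero_of_not_summable ha, tsum_eq_zero_of_not_summable hb, sub_zero, abs_zero]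
    exact tsum_nonneg fun i => (abs_nonneg _).trans (h i)

theorem setIntegral_univ_pi_prod {ι 𝕜 : Type*} [Fintype ι] [RCLike 𝕜] {E : ι → Type*}
    [∀ i, MeasureSpace (E i)] [∀ i, SigmaFinite (volume : Measure (E i))]
    (s : ∀ i, Set (E i)) (f : ∀ i, E i → 𝕜) :
    ∫ x in univ.pi s, ∏ i, f i (x i) = ∏ i, ∫ y in s i, f i y := by
  rw [volume_pi, Measure.restrict_pi_pi, integral_fintype_prod_eq_prod]

theorem integral_Icc_exp_mul {μ t : ℝ} (hμ : μ ≠ 0) (ht : 0 ≤ t) :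
    ∫ u in Icc 0 t, Real.exp (μ * u) = (Real.exp (μ * t) - 1) / μ := by
  rw [integral_Icc_eq_integral_Ioc, ← intervalIntegral.integral_of_le ht,
    intervalIntegral.integral_comp_mul_left (fun u => Real.exp u) hμ]
  simp [integral_exp, div_eq_inv_mul]

theorem setIntegral_cube_exp_mul_apply {n : ℕ} {μ t : ℝ} (hμ : μ ≠ 0) (ht : 0 ≤ t)
    (i : Fin (n + 1)) :
    ∫ s in univ.pi fun _ : Fin (n + 1) => Icc 0 t, Real.exp (μ * s i) =
      (Real.exp (μ * t) - 1) / μ * t ^ n := by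
  have h := setIntegral_univ_pi_prod (fun _ : Fin (n + 1) => Icc 0 t)
    fun j u => if j = i then Real.exp (μ * u) else 1
  simp only [Finset.prod_ite_eq', Finset.mem_univ, if_true] at h
  rw [h, ← Finset.mul_prod_erase _ _ (Finset.mem_univ i)]
  simp only [↓reduceIte, integral_Icc_exp_mul hμ ht]
  have hother : ∀ j ∈ Finset.univ.erase i,
      (∫ y in Icc 0 t, if j = i then Real.exp (μ * y) else 1) = t := fun j hj => by
    simp [Finset.ne_of_mem_erase hj, ht]
  simp [Finset.prod_congr rfl hother]

theorem setIntegral_cube_sum_exp_mul {n : ℕ} {μ t : ℝ} (hμ : μ ≠ 0) (ht : 0 ≤ t) :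
    ∫ s in univ.pi fun _ : Fin (n + 1) => Icc 0 t, ∑ i, Real.exp (μ * s i) =
      (n + 1) * ((Real.exp (μ * t) - 1) / μ * t ^ n) := by
  rw [integral_finsetSum _ fun i _ => ?_]
  · simp only [setIntegral_cube_exp_mul_apply hμ ht, Finset.sum_const, Finset.card_univ,
      Fintype.card_fin, nsmul_eq_mul]
    push_cast
    ring
  · exact (Real.continuous_exp.comp (continuous_const.mul (continuous_apply i))).continuousOn
      |>.integrableOn_compact (isCompact_univ_pi fun _ => isCompact_Icc)

/-- The norm `‖x‖_μ` of the paper. -/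
noncomputable def expWeightedSupNorm (T μ : ℝ) (x : ℝ → ℝ) : ℝ :=
  ⨆ t : Icc (0 : ℝ) T, Real.exp (-μ * t) * |x t|

section expWeightedSupNorm

variable {T μ : ℝ} {x : ℝ → ℝ}

theorem expWeightedSupNorm_nonneg : 0 ≤ expWeightedSupNorm T μ x :=
  Real.iSup_nonneg fun _ => by positivity

theorem expWeightedSupNorm_le {C : ℝ} (h : ∀ t ∈ Icc 0 T, Real.exp (-μ * t) * |x t| ≤ C)
    (hC : 0 ≤ C) : expWeightedSupNorm T μ x ≤ C :=
  Real.iSup_le (fun t => h t t.2) hC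

theorem abs_le_exp_mul_expWeightedSupNorm (hx : ContinuousOn x (Icc 0 T)) {s : ℝ}
    (hs : s ∈ Icc 0 T) : |x s| ≤ Real.exp (μ * s) * expWeightedSupNorm T μ x := by
  have hbdd : BddAbove (range fun t : Icc (0 : ℝ) T => Real.exp (-μ * t) * |x t|) :=
    (isCompact_range ((by fun_prop : Continuous fun t : Icc (0 : ℝ) T => Real.exp (-μ * t)).mul
      hx.domRestrict.abs)).bddAbove
  calc |x s| = Real.exp (μ * s) * (Real.exp (-μ * s) * |x s|) := by
        rw [← mul_assoc, ← Real.exp_add]; simp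
    _ ≤ Real.exp (μ * s) * expWeightedSupNorm T μ x :=
        mul_le_mul_of_nonneg_left (le_ciSup hbdd ⟨s, hs⟩) (Real.exp_pos _).le

end expWeightedSupNorm

theorem integrableOn_cube_comp {n : ℕ} {T t : ℝ} {F : ℝ → (Fin n → ℝ) → (Fin n → ℝ) → ℝ}
    (hF : ContinuousOn (fun p : ℝ × (Fin n → ℝ) × (Fin n → ℝ) => F p.1 p.2.1 p.2.2)
      (Icc 0 T ×ˢ ((univ.pi fun _ => Icc (0 : ℝ) T) ×ˢ univ)))
    (ht : t ∈ Icc 0 T) {z : ℝ → ℝ} (hz : ContinuousOn z (Icc 0 T)) :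
    IntegrableOn (fun s => F t s fun i => z (s i)) (univ.pi fun _ => Icc 0 t) := by
  have hcube : univ.pi (fun _ : Fin n => Icc 0 t) ⊆ univ.pi fun _ => Icc 0 T :=
    pi_mono fun _ _ => Icc_subset_Icc_right ht.2
  refine ContinuousOn.integrableOn_compact (isCompact_univ_pi fun _ => isCompact_Icc) ?_
  refine hF.comp (continuousOn_const.prodMk (continuousOn_id.prodMk ?_)) fun s hs =>
    ⟨ht, hcube hs, mem_univ _⟩
  exact continuousOn_pi.2 fun i =>
    hz.comp (continuous_apply i).continuousOn fun s hs => hcube hs i (mem_univ i)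

theorem nonneg_of_abs_sub_le_mul_sum {ι : Type*} [Fintype ι] [Nonempty ι] {g : (ι → ℝ) → ℝ}
    {K : ℝ} (h : ∀ x ξ, |g x - g ξ| ≤ K * ∑ i, |x i - ξ i|) : 0 ≤ K := by
  have h10 := (abs_nonneg _).trans (h 1 0)
  simp only [Pi.one_apply, Pi.zero_apply, sub_zero, abs_one, Finset.sum_const, nsmul_one] at h10
  exact nonneg_of_mul_nonneg_left h10 (by simp [Fintype.card_pos])

theorem abs_setIntegral_cube_sub_le {n : ℕ} {t μ K : ℝ} (hμ : μ ≠ 0) (ht : 0 ≤ t)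
    {F G : (Fin (n + 1) → ℝ) → ℝ} (hF : IntegrableOn F (univ.pi fun _ => Icc 0 t))
    (hG : IntegrableOn G (univ.pi fun _ => Icc 0 t))
    (hFG : ∀ s ∈ univ.pi fun _ => Icc 0 t, |F s - G s| ≤ K * ∑ i, Real.exp (μ * s i)) :
    |(∫ s in univ.pi fun _ => Icc 0 t, F s) - ∫ s in univ.pi fun _ => Icc 0 t, G s| ≤
      K * ((n + 1) * ((Real.exp (μ * t) - 1) / μ * t ^ n)) := by
  rw [← MeasureTheory.integral_sub hF hG, ← setIntegral_cube_sum_exp_mul hμ ht,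
    ← integral_const_mul K, ← Real.norm_eq_abs]
  refine norm_integral_le_of_norm_le ?_ ?_
  · exact (by fun_prop : Continuous fun s : Fin (n + 1) → ℝ => K * ∑ i, Real.exp (μ * s i))
      |>.continuousOn.integrableOn_compact (isCompact_univ_pi fun _ => isCompact_Icc)
  · filter_upwards [ae_restrict_mem (MeasurableSet.univ_pi fun _ => measurableSet_Icc)]
      with s hs using hFG s hs

theorem one_sub_exp_neg_mul_div_le {μ t T : ℝ} (hμ : 0 < μ) (htT : t ≤ T) :
    Real.exp (-μ * t) * ((Real.exp (μ * t) - 1) / μ) ≤ (1 - Real.exp (-μ * T)) / μ := by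
  calc Real.exp (-μ * t) * ((Real.exp (μ * t) - 1) / μ) = (1 - Real.exp (-μ * t)) / μ := by
        rw [mul_div_assoc', mul_sub, ← Real.exp_add]
        simp
    _ ≤ (1 - Real.exp (-μ * T)) / μ :=
        div_le_div_of_nonneg_right (sub_le_sub_left (Real.exp_le_exp.2 (by nlinarith)) 1) hμ.le

theorem abs_setIntegral_cube_comp_sub_le {n : ℕ} {T t μ K : ℝ}
    {F : ℝ → (Fin (n + 1) → ℝ) → (Fin (n + 1) → ℝ) → ℝ}
    (hF : ContinuousOn (fun p : ℝ × (Fin (n + 1) → ℝ) × (Fin (n + 1) → ℝ) => F p.1 p.2.1 p.2.2)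
      (Icc 0 T ×ˢ ((univ.pi fun _ => Icc (0 : ℝ) T) ×ˢ univ)))
    (hlip : ∀ (t : ℝ) (s x ξ : Fin (n + 1) → ℝ), t ∈ Icc 0 T → (∀ i, s i ∈ Icc 0 T) →
      |F t s x - F t s ξ| ≤ K * ∑ i, |x i - ξ i|)
    (hK : 0 ≤ K) {x ξ : ℝ → ℝ} (hx : ContinuousOn x (Icc 0 T)) (hξ : ContinuousOn ξ (Icc 0 T))
    (hμ : μ ≠ 0) (ht : t ∈ Icc 0 T) :
    |(∫ s in univ.pi fun _ => Icc 0 t, F t s fun i => x (s i)) -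
        ∫ s in univ.pi fun _ => Icc 0 t, F t s fun i => ξ (s i)| ≤
      K * expWeightedSupNorm T μ (x - ξ) * ((n + 1) * ((Real.exp (μ * t) - 1) / μ * t ^ n)) := by
  refine abs_setIntegral_cube_sub_le hμ ht.1 (integrableOn_cube_comp hF ht hx)
    (integrableOn_cube_comp hF ht hξ) fun s hs => ?_
  have hsT : ∀ i, s i ∈ Icc 0 T := fun i => Icc_subset_Icc_right ht.2 (hs i (mem_univ i))
  calc _ ≤ K * ∑ i, |x (s i) - ξ (s i)| := hlip t s _ _ ht hsT
    _ ≤ K * ∑ i, expWeightedSupNorm T μ (x - ξ) * Real.exp (μ * s i) := by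
        gcongr with i
        rw [mul_comm]
        exact abs_le_exp_mul_expWeightedSupNorm (hx.sub hξ) (hsT i)
    _ = _ := by rw [← Finset.mul_sum, mul_assoc]

section VolterraSeries

variable {T : ℝ} {f : (n : ℕ) → ℝ → (Fin n → ℝ) → (Fin n → ℝ) → ℝ} {L : ℕ → ℝ}

theorem volterra_lipschitzConst_nonneg (hT : 0 ≤ T)
    (hlip : ∀ (n : ℕ) (t : ℝ) (s x ξ : Fin (n + 1) → ℝ), t ∈ Icc 0 T →
      (∀ i, s i ∈ Icc 0 T) →
      |f (n + 1) t s x - f (n + 1) t s ξ| ≤ L (n + 1) * ∑ i, |x i - ξ i|) (n : ℕ) :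
    0 ≤ L (n + 1) :=
  have h0 : (0 : ℝ) ∈ Icc 0 T := ⟨le_rfl, hT⟩
  nonneg_of_abs_sub_le_mul_sum fun x ξ => hlip n 0 0 x ξ h0 fun _ => h0

theorem abs_volterraSeriesOp_sub_le (y₀ : ℝ → ℝ)
    (hfc : ∀ n : ℕ, ContinuousOn
      (fun p : ℝ × (Fin (n + 1) → ℝ) × (Fin (n + 1) → ℝ) =>
        f (n + 1) p.1 p.2.1 p.2.2)
      ((Icc 0 T) ×ˢ ((Set.univ.pi fun _ => Icc (0 : ℝ) T) ×ˢ Set.univ)))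
    (hlip : ∀ (n : ℕ) (t : ℝ) (s x ξ : Fin (n + 1) → ℝ), t ∈ Icc 0 T →
      (∀ i, s i ∈ Icc 0 T) →
      |f (n + 1) t s x - f (n + 1) t s ξ| ≤ L (n + 1) * ∑ i, |x i - ξ i|)
    (hsum : Summable (fun m : ℕ => L (m + 1) * T ^ m / Nat.factorial m))
    {x ξ : ℝ → ℝ} (hx : ContinuousOn x (Icc 0 T)) (hξ : ContinuousOn ξ (Icc 0 T))
    {μ : ℝ} (hμ : 0 < μ) {t : ℝ} (ht : t ∈ Icc 0 T) :
    |volterraSeriesOp f y₀ x t - volterraSeriesOp f y₀ ξ t| ≤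
      (∑' m : ℕ, L (m + 1) * T ^ m / Nat.factorial m) * ((Real.exp (μ * t) - 1) / μ) *
        expWeightedSupNorm T μ (x - ξ) := by
  set N := expWeightedSupNorm T μ (x - ξ)
  set E := (Real.exp (μ * t) - 1) / μ
  have hL := volterra_lipschitzConst_nonneg (ht.1.trans ht.2) hlip
  have hEN : 0 ≤ E * N :=
    mul_nonneg (div_nonneg (sub_nonneg.2 (Real.one_le_exp (by nlinarith [ht.1]))) hμ.le)
      expWeightedSupNorm_nonneg
  have hterm : ∀ n : ℕ,
      |(1 / (n + 1).factorial : ℝ) *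
          (∫ s in univ.pi fun _ => Icc 0 t, f (n + 1) t s fun i => x (s i)) -
        (1 / (n + 1).factorial : ℝ) *
          ∫ s in univ.pi fun _ => Icc 0 t, f (n + 1) t s fun i => ξ (s i)| ≤
        L (n + 1) * T ^ n / n.factorial * (E * N) := by
    intro n
    rw [← mul_sub, abs_mul, abs_of_pos (by positivity)]
    calc _ ≤ (1 / (n + 1).factorial : ℝ) * (L (n + 1) * N * ((n + 1) * (E * t ^ n))) := by
          gcongr
          exact abs_setIntegral_cube_comp_sub_le (hfc n) (hlip n) (hL n) hx hξ hμ.ne' ht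
      _ = L (n + 1) * t ^ n / n.factorial * (E * N) := by
          rw [Nat.factorial_succ]; push_cast; field_simp
      _ ≤ L (n + 1) * T ^ n / n.factorial * (E * N) := by
          gcongr; exacts [hL n, ht.1, ht.2]
  calc _ = |∑' n : ℕ, (1 / (n + 1).factorial : ℝ) *
          (∫ s in univ.pi fun _ => Icc 0 t, f (n + 1) t s fun i => x (s i)) -
        ∑' n : ℕ, (1 / (n + 1).factorial : ℝ) *
          ∫ s in univ.pi fun _ => Icc 0 t, f (n + 1) t s fun i => ξ (s i)| := by
        simp only [volterraSeriesOp, add_sub_add_left_eq_sub]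
    _ ≤ ∑' n : ℕ, L (n + 1) * T ^ n / n.factorial * (E * N) :=
        abs_tsum_sub_tsum_le hterm (hsum.mul_right _)
    _ = _ := by rw [tsum_mul_right, mul_assoc]

end VolterraSeries

theorem volterra_series_operator_contraction_general (T : ℝ) (hT : 0 < T)
    (f : (n : ℕ) → ℝ → (Fin n → ℝ) → (Fin n → ℝ) → ℝ)
    (y₀ : ℝ → ℝ)
    (L : ℕ → ℝ)
    (hfc : ∀ n : ℕ, ContinuousOn
      (fun p : ℝ × (Fin (n + 1) → ℝ) × (Fin (n + 1) → ℝ) =>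
        f (n + 1) p.1 p.2.1 p.2.2)
      ((Icc 0 T) ×ˢ ((Set.univ.pi fun _ => Icc (0 : ℝ) T) ×ˢ Set.univ)))
    (hlip : ∀ (n : ℕ) (t : ℝ) (s x ξ : Fin (n + 1) → ℝ), t ∈ Icc 0 T →
      (∀ i, s i ∈ Icc 0 T) →
      |f (n + 1) t s x - f (n + 1) t s ξ| ≤ L (n + 1) * ∑ i, |x i - ξ i|)
    (hsum : Summable (fun m : ℕ => L (m + 1) * T ^ m / Nat.factorial m))
    (x ξ : ℝ → ℝ) (hx : ContinuousOn x (Icc 0 T)) (hξ : ContinuousOn ξ (Icc 0 T))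
    (μ : ℝ) (hμ : 0 < μ) :
    (⨆ t : Icc (0 : ℝ) T, Real.exp (-μ * t) *
        |volterraSeriesOp f y₀ x t - volterraSeriesOp f y₀ ξ t|) ≤
      ((1 - Real.exp (-μ * T)) / μ) *
        (∑' m : ℕ, L (m + 1) * T ^ m / Nat.factorial m) *
        (⨆ t : Icc (0 : ℝ) T, Real.exp (-μ * t) * |x t - ξ t|) := by
  change expWeightedSupNorm T μ (volterraSeriesOp f y₀ x - volterraSeriesOp f y₀ ξ) ≤
    _ * _ * expWeightedSupNorm T μ (x - ξ)
  have hK : 0 ≤ ∑' m : ℕ, L (m + 1) * T ^ m / Nat.factorial m := tsum_nonneg fun m =>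
    div_nonneg (mul_nonneg (volterra_lipschitzConst_nonneg hT.le hlip m) (by positivity))
      (Nat.cast_nonneg _)
  refine expWeightedSupNorm_le (fun t ht => ?_) ?_
  · calc _ ≤ Real.exp (-μ * t) * ((∑' m : ℕ, L (m + 1) * T ^ m / Nat.factorial m) *
          ((Real.exp (μ * t) - 1) / μ) * expWeightedSupNorm T μ (x - ξ)) := by
          gcongr
          exact abs_volterraSeriesOp_sub_le y₀ hfc hlip hsum hx hξ hμ ht
      _ = Real.exp (-μ * t) * ((Real.exp (μ * t) - 1) / μ) *
          (∑' m : ℕ, L (m + 1) * T ^ m / Nat.factorial m) * expWeightedSupNorm T μ (x - ξ) := by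
          ring
      _ ≤ _ := by
          gcongr
          · exact expWeightedSupNorm_nonneg
          · exact one_sub_exp_neg_mul_div_le hμ ht.2
  · exact mul_nonneg (mul_nonneg (div_nonneg
      (sub_nonneg.2 (Real.exp_le_one_iff.2 (by nlinarith))) hμ.le) hK) expWeightedSupNorm_nonneg

/-- Contraction estimate in the weighted norm
`‖x‖_μ = sup_{0≤t≤T} e^{−μt} |x(t)|`:
`‖Sx − Sξ‖_μ ≤ ((1 − e^{−μT})/μ) (Σₘ L_{m+1} Tᵐ/m!) ‖x − ξ‖_μ`. -/
theorem volterra_series_operator_contraction (T : ℝ) (hT : 0 < T)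
    (f : (n : ℕ) → ℝ → (Fin n → ℝ) → (Fin n → ℝ) → ℝ)
    (y₀ : ℝ → ℝ) (hy₀ : ContinuousOn y₀ (Icc 0 T))
    (L : ℕ → ℝ)
    (hfc : ∀ n : ℕ, ContinuousOn
      (fun p : ℝ × (Fin (n + 1) → ℝ) × (Fin (n + 1) → ℝ) =>
        f (n + 1) p.1 p.2.1 p.2.2)
      ((Icc 0 T) ×ˢ ((Set.univ.pi fun _ => Icc (0 : ℝ) T) ×ˢ Set.univ)))
    (hlip : ∀ (n : ℕ) (t : ℝ) (s x ξ : Fin (n + 1) → ℝ), t ∈ Icc 0 T →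
      (∀ i, s i ∈ Icc 0 T) →
      |f (n + 1) t s x - f (n + 1) t s ξ| ≤ L (n + 1) * ∑ i, |x i - ξ i|)
    (hsum : Summable (fun m : ℕ => L (m + 1) * T ^ m / Nat.factorial m))
    (x ξ : ℝ → ℝ) (hx : ContinuousOn x (Icc 0 T)) (hξ : ContinuousOn ξ (Icc 0 T))
    (μ : ℝ) (hμ : 0 < μ) :
    (⨆ t : Icc (0 : ℝ) T, Real.exp (-μ * t) *
        |volterraSeriesOp f y₀ x t - volterraSeriesOp f y₀ ξ t|) ≤
      ((1 - Real.exp (-μ * T)) / μ) *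
        (∑' m : ℕ, L (m + 1) * T ^ m / Nat.factorial m) *
        (⨆ t : Icc (0 : ℝ) T, Real.exp (-μ * t) * |x t - ξ t|) :=
  volterra_series_operator_contraction_general T hT f y₀ L hfc hlip hsum x ξ hx hξ μ hμ
end
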